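/- arXiv:1901.04030 — 5 statements merged into one kernel-verified Lean document; each statement's English description precedes it below -/
import Mathlib

section
/- Let (X, μ) and (T, ν) be finite measure spaces, let (φ_ℓ)_{ℓ≥1} be an orthonormal family in L²(μ), let (λ_ℓ)_{ℓ≥1} be functions in L²(ν) with Σ_{ℓ=1}^∞ ‖λ_ℓ‖²_{L²(ν)} < ∞, and let C_t : T × T → ℝ be measurable, bounded, and positive semidefinite in the integral sense: for every g ∈ L¹(ν), ∫∫ g(t) C_t(t,t') g(t') dν(t) dν(t') ≥ 0. Then for every f ∈ L²(μ⊗ν), setting f_ℓ(t) := ∫_X f(x,t) φ_ℓ(x) dμ(x), one has ∫∫_{(X×T)²} f(x,t) [Σ_{ℓ=1}^∞ λ_ℓ(t) C_t(t,t') λ_ℓ(t') φ_ℓ(x) φ_ℓ(x')] f(x',t') d(μ⊗ν)(x,t) d(μ⊗ν)(x',t') = Σ_{ℓ=1}^∞ ∫∫ f_ℓ(t) λ_ℓ(t) C_t(t,t') λ_ℓ(t') f_ℓ(t') dν(t) dν(t') ≥ 0, where all the integrals and the series converge absolutely. -/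
/-!
Write `A_ℓ(x, t) = f(x, t) φ_ℓ(x) λ_ℓ(t)`. The `ℓ`-th term of the kernel integrand is
`A_ℓ(z) C_t(t, t') A_ℓ(z')`, whose `L¹` norm is at most `M ‖A_ℓ‖₁² ≤ M ‖f‖₂² ‖λ_ℓ‖₂²` by
Cauchy–Schwarz and `‖φ_ℓ‖₂ = 1`. These bounds are summable, so the series can be integrated term
by term. Integrating out the space variables (Fubini) turns the `ℓ`-th term into the quadratic
form of `C_t` at `g_ℓ = f_ℓ λ_ℓ ∈ L¹(ν)`, which is non-negative by assumption.
-/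

open MeasureTheory Filter

section Series

variable {α E : Type*} [MeasurableSpace α] {μ : Measure α} [NormedAddCommGroup E]
  [CompleteSpace E] [SecondCountableTopology E] [MeasurableSpace E] [BorelSpace E]

theorem integrable_tsum_of_summable_integral_norm {ι : Type*} [Countable ι] {F : ι → α → E}
    (hF_int : ∀ i, Integrable (F i) μ) (hF_sum : Summable fun i ↦ ∫ a, ‖F i a‖ ∂μ) :
    Integrable (fun a ↦ ∑' i, F i a) μ := by
  refine ⟨(AEMeasurable.tsum fun i ↦ (hF_int i).aemeasurable).aestronglyMeasurable, ?_⟩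
  have hmeas : ∀ i, AEMeasurable (fun a ↦ ‖F i a‖ₑ) μ := fun i ↦ (hF_int i).1.enorm
  calc ∫⁻ a, ‖∑' i, F i a‖ₑ ∂μ ≤ ∫⁻ a, ∑' i, ‖F i a‖ₑ ∂μ :=
        lintegral_mono fun a ↦ enorm_tsum_le_tsum_enorm
    _ = ∑' i, ENNReal.ofReal (∫ a, ‖F i a‖ ∂μ) := by
        rw [lintegral_tsum hmeas]
        exact tsum_congr fun i ↦ (ofReal_integral_norm_eq_lintegral_enorm (hF_int i)).symm
    _ = ENNReal.ofReal (∑' i, ∫ a, ‖F i a‖ ∂μ) :=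
        (ENNReal.ofReal_tsum_of_nonneg (fun i ↦ integral_nonneg fun a ↦ norm_nonneg _) hF_sum).symm
    _ < ⊤ := ENNReal.ofReal_lt_top

end Series

section L2

variable {α : Type*} [MeasurableSpace α] {μ : Measure α} {u v : α → ℝ}

theorem sq_integral_norm_mul_le (hu : MemLp u 2 μ) (hv : MemLp v 2 μ) :
    (∫ x, ‖u x * v x‖ ∂μ) ^ 2 ≤ (∫ x, u x ^ 2 ∂μ) * ∫ x, v x ^ 2 ∂μ := by
  have h2 : ENNReal.ofReal 2 = 2 := by norm_num
  have hCS := integral_mul_norm_le_Lp_mul_Lq Real.HolderConjugate.two_two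
    (h2 ▸ hu) (h2 ▸ hv)
  simp only [Real.norm_eq_abs, Real.rpow_two, sq_abs, ← Real.sqrt_eq_rpow] at hCS
  calc (∫ x, ‖u x * v x‖ ∂μ) ^ 2
      ≤ (√(∫ x, u x ^ 2 ∂μ) * √(∫ x, v x ^ 2 ∂μ)) ^ 2 := by
        simp only [norm_mul, Real.norm_eq_abs]
        gcongr
    _ = (∫ x, u x ^ 2 ∂μ) * ∫ x, v x ^ 2 ∂μ := by
        rw [mul_pow, Real.sq_sqrt (integral_nonneg fun x ↦ sq_nonneg _),
          Real.sq_sqrt (integral_nonneg fun x ↦ sq_nonneg _)]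

end L2

section BoundedKernel

variable {α β : Type*} [MeasurableSpace α] [MeasurableSpace β] {μ : Measure α} {ν : Measure β}
  {K : α → β → ℝ} {M : ℝ} {a : α → ℝ} {b : β → ℝ}

theorem integrable_mul_kernel_mul
    (hK : AEStronglyMeasurable (Function.uncurry K) (μ.prod ν)) (hKM : ∀ s t, |K s t| ≤ M)
    (ha : Integrable a μ) (hb : Integrable b ν) :
    Integrable (fun q : α × β ↦ a q.1 * K q.1 q.2 * b q.2) (μ.prod ν) := by
  refine ((ha.mul_prod hb).bdd_mul hK (c := M) (Eventually.of_forall fun q ↦ hKM q.1 q.2)).congr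
    (Eventually.of_forall fun q ↦ ?_)
  rw [Function.uncurry_def]
  ring

theorem integral_norm_mul_kernel_mul_le [SFinite μ] [SFinite ν]
    (hK : AEStronglyMeasurable (Function.uncurry K) (μ.prod ν)) (hKM : ∀ s t, |K s t| ≤ M)
    (ha : Integrable a μ) (hb : Integrable b ν) :
    ∫ q : α × β, ‖a q.1 * K q.1 q.2 * b q.2‖ ∂(μ.prod ν)
      ≤ M * ((∫ s, ‖a s‖ ∂μ) * ∫ t, ‖b t‖ ∂ν) := by
  rw [← integral_prod_mul, ← integral_const_mul]
  refine integral_mono (integrable_mul_kernel_mul hK hKM ha hb).norm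
    ((ha.norm.mul_prod hb.norm).const_mul M) fun q ↦ ?_
  simp only [norm_mul, Real.norm_eq_abs]
  calc |a q.1| * |K q.1 q.2| * |b q.2| = |K q.1 q.2| * (|a q.1| * |b q.2|) := by ring
    _ ≤ M * (|a q.1| * |b q.2|) := by gcongr; exact hKM _ _

end BoundedKernel

section Product

variable {X T : Type*} [MeasurableSpace X] [MeasurableSpace T] {μ : Measure X} {ν : Measure T}

theorem MeasureTheory.MemLp.mul_prod {u : X → ℝ} {v : T → ℝ} (hu : MemLp u 2 μ) (hv : MemLp v 2 ν) :
    MemLp (fun p : X × T ↦ u p.1 * v p.2) 2 (μ.prod ν) := by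
  refine (memLp_two_iff_integrable_sq (hu.1.comp_fst.mul hv.1.comp_snd)).2 ?_
  simpa only [Pi.mul_apply, mul_pow] using hu.integrable_sq.mul_prod hv.integrable_sq

theorem measurable_uncurry_kernel_snd {K : T → T → ℝ} (hK : Measurable (Function.uncurry K)) :
    Measurable (Function.uncurry fun z z' : X × T ↦ K z.2 z'.2) :=
  hK.comp (measurable_fst.snd.prodMk measurable_snd.snd)

theorem integrable_mul_kernel_snd_mul {A B : X × T → ℝ} {K : T → T → ℝ} {M : ℝ}
    (hA : Integrable A (μ.prod ν)) (hB : Integrable B (μ.prod ν))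
    (hK : Measurable (Function.uncurry K)) (hKM : ∀ t t', |K t t'| ≤ M) :
    Integrable (fun q : (X × T) × (X × T) ↦ A q.1 * K q.1.2 q.2.2 * B q.2)
      ((μ.prod ν).prod (μ.prod ν)) :=
  integrable_mul_kernel_mul (measurable_uncurry_kernel_snd hK).aestronglyMeasurable
    (fun z z' ↦ hKM z.2 z'.2) hA hB

variable [SFinite μ] [SFinite ν]

theorem summable_sq_integral_norm_mul_prod {f : X × T → ℝ} {φ : ℕ → X → ℝ} {lam : ℕ → T → ℝ}
    (hf : MemLp f 2 (μ.prod ν)) (hφ : ∀ ℓ, MemLp (φ ℓ) 2 μ) (hφ_norm : ∀ ℓ, ∫ x, φ ℓ x ^ 2 ∂μ = 1)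
    (hlam : ∀ ℓ, MemLp (lam ℓ) 2 ν) (hsum : Summable fun ℓ ↦ ∫ t, lam ℓ t ^ 2 ∂ν) :
    Summable fun ℓ ↦ (∫ p, ‖f p * (φ ℓ p.1 * lam ℓ p.2)‖ ∂(μ.prod ν)) ^ 2 := by
  refine Summable.of_nonneg_of_le (fun ℓ ↦ by positivity) (fun ℓ ↦ ?_)
    (hsum.mul_left (∫ p, f p ^ 2 ∂(μ.prod ν)))
  have hsq : ∫ p : X × T, (φ ℓ p.1 * lam ℓ p.2) ^ 2 ∂(μ.prod ν) = ∫ t, lam ℓ t ^ 2 ∂ν := by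
    simp_rw [mul_pow]
    rw [integral_prod_mul (fun x ↦ φ ℓ x ^ 2) (fun t ↦ lam ℓ t ^ 2), hφ_norm, one_mul]
  exact hsq ▸ sq_integral_norm_mul_le hf ((hφ ℓ).mul_prod (hlam ℓ))

theorem integral_prod_mul_comp_snd {A : X × T → ℝ} {b : T → ℝ}
    (h : Integrable (fun p ↦ A p * b p.2) (μ.prod ν)) :
    ∫ p, A p * b p.2 ∂(μ.prod ν) = ∫ t, (∫ x, A (x, t) ∂μ) * b t ∂ν := by
  rw [integral_prod_symm _ h]
  exact integral_congr_ae (Eventually.of_forall fun t ↦ integral_mul_const (b t) _)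

theorem integral_mul_kernel_mul_eq_integral_fiber {A B : X × T → ℝ} {K : T → T → ℝ} {M : ℝ}
    (hA : Integrable A (μ.prod ν)) (hB : Integrable B (μ.prod ν))
    (hK : Measurable (Function.uncurry K)) (hKM : ∀ t t', |K t t'| ≤ M) :
    ∫ q, A q.1 * K q.1.2 q.2.2 * B q.2 ∂((μ.prod ν).prod (μ.prod ν))
      = ∫ t, ∫ t', (∫ x, A (x, t) ∂μ) * K t t' * (∫ x, B (x, t') ∂μ) ∂ν ∂ν := by
  set a : T → ℝ := fun t ↦ ∫ x, A (x, t) ∂μ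
  set b : T → ℝ := fun t ↦ ∫ x, B (x, t) ∂μ
  have hb : Integrable b ν := hB.integral_prod_right
  -- Integrating out `z'` first leaves `A z * J z.2`; `J` is bounded by `M ‖b‖₁`, which keeps the
  -- outer integrand integrable.
  set J : T → ℝ := fun t ↦ ∫ t', K t t' * b t' ∂ν
  have hKt : ∀ t, AEStronglyMeasurable (K t) ν := fun t ↦
    (hK.comp measurable_prodMk_left).aestronglyMeasurable
  have hJ_meas : AEStronglyMeasurable J ν :=
    (hK.aestronglyMeasurable.mul hb.1.comp_snd).integral_prod_right'
  have hJ_le : ∀ t, ‖J t‖ ≤ M * ∫ t', ‖b t'‖ ∂ν := fun t ↦ by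
    rw [← integral_const_mul]
    refine norm_integral_le_of_norm_le (hb.norm.const_mul M) (Eventually.of_forall fun t' ↦ ?_)
    rw [norm_mul, Real.norm_eq_abs]
    exact mul_le_mul_of_nonneg_right (hKM t t') (norm_nonneg _)
  have hinner : ∀ z : X × T, ∫ z', A z * K z.2 z'.2 * B z' ∂(μ.prod ν) = A z * J z.2 := by
    intro z
    simp_rw [mul_assoc, integral_const_mul, mul_comm (K z.2 _)]
    rw [integral_prod_mul_comp_snd]
    · simp_rw [J, mul_comm (K z.2 _)]
      rfl
    · exact hB.mul_bdd (hKt z.2).comp_snd (Eventually.of_forall fun z' ↦ hKM z.2 z'.2)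
  rw [integral_prod _ (integrable_mul_kernel_snd_mul hA hB hK hKM)]
  simp only [hinner]
  rw [integral_prod_mul_comp_snd (hA.mul_bdd hJ_meas.comp_snd
    (Eventually.of_forall fun z ↦ hJ_le z.2))]
  refine integral_congr_ae (Eventually.of_forall fun t ↦ ?_)
  simp_rw [mul_assoc, integral_const_mul]
  rfl

variable {A : ℕ → X × T → ℝ} {K : T → T → ℝ} {M : ℝ}

theorem summable_integral_norm_mul_kernel_mul (hA : ∀ ℓ, Integrable (A ℓ) (μ.prod ν))
    (hA_sum : Summable fun ℓ ↦ (∫ p, ‖A ℓ p‖ ∂(μ.prod ν)) ^ 2)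
    (hK : Measurable (Function.uncurry K)) (hKM : ∀ t t', |K t t'| ≤ M) :
    Summable fun ℓ ↦
      ∫ q, ‖A ℓ q.1 * K q.1.2 q.2.2 * A ℓ q.2‖ ∂((μ.prod ν).prod (μ.prod ν)) :=
  Summable.of_nonneg_of_le (fun ℓ ↦ integral_nonneg fun q ↦ norm_nonneg _)
    (fun ℓ ↦ (integral_norm_mul_kernel_mul_le
      (measurable_uncurry_kernel_snd hK).aestronglyMeasurable (fun z z' ↦ hKM z.2 z'.2)
      (hA ℓ) (hA ℓ)).trans_eq (by rw [← sq]))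
    (hA_sum.mul_left M)

theorem integrable_tsum_mul_kernel_mul (hA : ∀ ℓ, Integrable (A ℓ) (μ.prod ν))
    (hA_sum : Summable fun ℓ ↦ (∫ p, ‖A ℓ p‖ ∂(μ.prod ν)) ^ 2)
    (hK : Measurable (Function.uncurry K)) (hKM : ∀ t t', |K t t'| ≤ M) :
    Integrable (fun q ↦ ∑' ℓ, A ℓ q.1 * K q.1.2 q.2.2 * A ℓ q.2)
      ((μ.prod ν).prod (μ.prod ν)) :=
  integrable_tsum_of_summable_integral_norm
    (fun ℓ ↦ integrable_mul_kernel_snd_mul (hA ℓ) (hA ℓ) hK hKM)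
    (summable_integral_norm_mul_kernel_mul hA hA_sum hK hKM)

theorem hasSum_integral_fiber_mul_kernel_mul (hA : ∀ ℓ, Integrable (A ℓ) (μ.prod ν))
    (hA_sum : Summable fun ℓ ↦ (∫ p, ‖A ℓ p‖ ∂(μ.prod ν)) ^ 2)
    (hK : Measurable (Function.uncurry K)) (hKM : ∀ t t', |K t t'| ≤ M) :
    HasSum (fun ℓ ↦ ∫ t, ∫ t', (∫ x, A ℓ (x, t) ∂μ) * K t t' * (∫ x, A ℓ (x, t') ∂μ) ∂ν ∂ν)
      (∫ q, ∑' ℓ, A ℓ q.1 * K q.1.2 q.2.2 * A ℓ q.2 ∂((μ.prod ν).prod (μ.prod ν))) := by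
  simp_rw [← integral_mul_kernel_mul_eq_integral_fiber (hA _) (hA _) hK hKM]
  exact hasSum_integral_of_summable_integral_norm
    (fun ℓ ↦ integrable_mul_kernel_snd_mul (hA ℓ) (hA ℓ) hK hKM)
    (summable_integral_norm_mul_kernel_mul hA hA_sum hK hKM)

end Product

theorem stmt_1_general {X T : Type*} [MeasurableSpace X] [MeasurableSpace T]
    (μ : Measure X) (ν : Measure T) [IsFiniteMeasure μ] [IsFiniteMeasure ν]
    (φ : ℕ → X → ℝ) (lam : ℕ → T → ℝ) (Ct : T → T → ℝ) (M : ℝ)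
    (hφL2 : ∀ ℓ, MemLp (φ ℓ) 2 μ)
    (hφon : ∀ ℓ ℓ', ∫ x, φ ℓ x * φ ℓ' x ∂μ = if ℓ = ℓ' then 1 else 0)
    (hlamL2 : ∀ ℓ, MemLp (lam ℓ) 2 ν)
    (hsum : Summable fun ℓ => ∫ t, (lam ℓ t) ^ 2 ∂ν)
    (hCtmeas : Measurable (Function.uncurry Ct))
    (hCtbd : ∀ t t', |Ct t t'| ≤ M)
    (hCtpsd : ∀ g : T → ℝ, Integrable g ν →
      0 ≤ ∫ t, ∫ t', g t * Ct t t' * g t' ∂ν ∂ν)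
    (f : X × T → ℝ) (hf : MemLp f 2 (μ.prod ν))
    (fc : ℕ → T → ℝ) (hfc : ∀ ℓ t, fc ℓ t = ∫ x, f (x, t) * φ ℓ x ∂μ) :
    (Integrable (fun q : (X × T) × (X × T) =>
        f q.1 * (∑' ℓ : ℕ,
          lam ℓ q.1.2 * Ct q.1.2 q.2.2 * lam ℓ q.2.2 * φ ℓ q.1.1 * φ ℓ q.2.1)
          * f q.2) ((μ.prod ν).prod (μ.prod ν))) ∧
    (∀ ℓ : ℕ, Integrable (fun q : T × T =>
        fc ℓ q.1 * lam ℓ q.1 * Ct q.1 q.2 * lam ℓ q.2 * fc ℓ q.2) (ν.prod ν)) ∧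
    (Summable fun ℓ : ℕ =>
        ∫ t, ∫ t', fc ℓ t * lam ℓ t * Ct t t' * lam ℓ t' * fc ℓ t' ∂ν ∂ν) ∧
    (∫ q : (X × T) × (X × T),
        f q.1 * (∑' ℓ : ℕ,
          lam ℓ q.1.2 * Ct q.1.2 q.2.2 * lam ℓ q.2.2 * φ ℓ q.1.1 * φ ℓ q.2.1)
          * f q.2 ∂((μ.prod ν).prod (μ.prod ν))
      = ∑' ℓ : ℕ,
          ∫ t, ∫ t', fc ℓ t * lam ℓ t * Ct t t' * lam ℓ t' * fc ℓ t' ∂ν ∂ν) ∧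
    (0 ≤ ∑' ℓ : ℕ,
        ∫ t, ∫ t', fc ℓ t * lam ℓ t * Ct t t' * lam ℓ t' * fc ℓ t' ∂ν ∂ν) := by
  set A : ℕ → X × T → ℝ := fun ℓ p ↦ f p * (φ ℓ p.1 * lam ℓ p.2)
  have hA : ∀ ℓ, Integrable (A ℓ) (μ.prod ν) := fun ℓ ↦
    hf.integrable_mul ((hφL2 ℓ).mul_prod (hlamL2 ℓ))
  have hA_sum : Summable fun ℓ ↦ (∫ p, ‖A ℓ p‖ ∂(μ.prod ν)) ^ 2 :=
    summable_sq_integral_norm_mul_prod hf hφL2 (fun ℓ ↦ by simpa [sq] using hφon ℓ ℓ) hlamL2 hsum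
  have hA_fiber : ∀ ℓ t, ∫ x, A ℓ (x, t) ∂μ = fc ℓ t * lam ℓ t := fun ℓ t ↦ by
    simp_rw [A, hfc, ← mul_assoc, integral_mul_const]
  have hg : ∀ ℓ, Integrable (fun t ↦ fc ℓ t * lam ℓ t) ν := fun ℓ ↦ by
    simpa only [hA_fiber] using (hA ℓ).integral_prod_right
  have hquad : ∀ ℓ t t', fc ℓ t * lam ℓ t * Ct t t' * lam ℓ t' * fc ℓ t'
      = fc ℓ t * lam ℓ t * Ct t t' * (fc ℓ t' * lam ℓ t') := fun ℓ t t' ↦ by ring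
  have hkernel : (fun q : (X × T) × (X × T) ↦ f q.1 * (∑' ℓ : ℕ,
      lam ℓ q.1.2 * Ct q.1.2 q.2.2 * lam ℓ q.2.2 * φ ℓ q.1.1 * φ ℓ q.2.1) * f q.2)
      = fun q ↦ ∑' ℓ, A ℓ q.1 * Ct q.1.2 q.2.2 * A ℓ q.2 := by
    ext q
    rw [← tsum_mul_left, ← tsum_mul_right]
    exact tsum_congr fun ℓ ↦ by ring
  have hterms := hasSum_integral_fiber_mul_kernel_mul hA hA_sum hCtmeas hCtbd
  simp_rw [hA_fiber, ← hquad] at hterms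
  refine ⟨hkernel ▸ integrable_tsum_mul_kernel_mul hA hA_sum hCtmeas hCtbd, fun ℓ ↦ ?_,
    hterms.summable, hkernel ▸ hterms.tsum_eq.symm,
    tsum_nonneg fun ℓ ↦ (hCtpsd _ (hg ℓ)).trans_eq ?_⟩
  · simpa only [hquad] using
      integrable_mul_kernel_mul hCtmeas.aestronglyMeasurable hCtbd (hg ℓ) (hg ℓ)
  · simp_rw [hquad]

/-- Non-negative definiteness part of Theorem 1 (Wellposedness of Mercer's Kernels):
for an orthonormal family `φ_ℓ` in `L²(μ)`, `λ_ℓ ∈ L²(ν)` with `Σ ‖λ_ℓ‖² < ∞`, and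
a bounded measurable `C_t` that is positive semidefinite in the integral sense, for
every `f ∈ L²(μ⊗ν)`, with `f_ℓ(t) = ∫ f(x,t) φ_ℓ(x) dμ(x)`,
`∫∫ f(z) [Σ_ℓ λ_ℓ(t) C_t(t,t') λ_ℓ(t') φ_ℓ(x) φ_ℓ(x')] f(z') dz dz'
 = Σ_ℓ ∫∫ f_ℓ(t) λ_ℓ(t) C_t(t,t') λ_ℓ(t') f_ℓ(t') dν dν ≥ 0`,
with all the integrals and series converging (absolutely). -/
theorem stmt_1 {X T : Type*} [MeasurableSpace X] [MeasurableSpace T]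
    (μ : Measure X) (ν : Measure T) [IsFiniteMeasure μ] [IsFiniteMeasure ν]
    (φ : ℕ → X → ℝ) (lam : ℕ → T → ℝ) (Ct : T → T → ℝ) (M : ℝ)
    (hφmeas : ∀ ℓ, Measurable (φ ℓ))
    (hφL2 : ∀ ℓ, MemLp (φ ℓ) 2 μ)
    (hφon : ∀ ℓ ℓ', ∫ x, φ ℓ x * φ ℓ' x ∂μ = if ℓ = ℓ' then 1 else 0)
    (hlammeas : ∀ ℓ, Measurable (lam ℓ))
    (hlamL2 : ∀ ℓ, MemLp (lam ℓ) 2 ν)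
    (hsum : Summable fun ℓ => ∫ t, (lam ℓ t) ^ 2 ∂ν)
    (hCtmeas : Measurable (Function.uncurry Ct))
    (hCtbd : ∀ t t', |Ct t t'| ≤ M)
    (hCtpsd : ∀ g : T → ℝ, Integrable g ν →
      0 ≤ ∫ t, ∫ t', g t * Ct t t' * g t' ∂ν ∂ν)
    (f : X × T → ℝ) (hfmeas : Measurable f) (hf : MemLp f 2 (μ.prod ν))
    (fc : ℕ → T → ℝ) (hfc : ∀ ℓ t, fc ℓ t = ∫ x, f (x, t) * φ ℓ x ∂μ) :
    (Integrable (fun q : (X × T) × (X × T) =>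
        f q.1 * (∑' ℓ : ℕ,
          lam ℓ q.1.2 * Ct q.1.2 q.2.2 * lam ℓ q.2.2 * φ ℓ q.1.1 * φ ℓ q.2.1)
          * f q.2) ((μ.prod ν).prod (μ.prod ν))) ∧
    (∀ ℓ : ℕ, Integrable (fun q : T × T =>
        fc ℓ q.1 * lam ℓ q.1 * Ct q.1 q.2 * lam ℓ q.2 * fc ℓ q.2) (ν.prod ν)) ∧
    (Summable fun ℓ : ℕ =>
        ∫ t, ∫ t', fc ℓ t * lam ℓ t * Ct t t' * lam ℓ t' * fc ℓ t' ∂ν ∂ν) ∧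
    (∫ q : (X × T) × (X × T),
        f q.1 * (∑' ℓ : ℕ,
          lam ℓ q.1.2 * Ct q.1.2 q.2.2 * lam ℓ q.2.2 * φ ℓ q.1.1 * φ ℓ q.2.1)
          * f q.2 ∂((μ.prod ν).prod (μ.prod ν))
      = ∑' ℓ : ℕ,
          ∫ t, ∫ t', fc ℓ t * lam ℓ t * Ct t t' * lam ℓ t' * fc ℓ t' ∂ν ∂ν) ∧
    (0 ≤ ∑' ℓ : ℕ,
        ∫ t, ∫ t', fc ℓ t * lam ℓ t * Ct t t' * lam ℓ t' * fc ℓ t' ∂ν ∂ν) :=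
  stmt_1_general μ ν φ lam Ct M hφL2 hφon hlamL2 hsum hCtmeas hCtbd hCtpsd f hf fc hfc
end

section
/- Let n ∈ ℕ, s ≥ 0, and c, C > 0. Let Φ be an n × n real orthogonal matrix and let λ_{0,ℓ}, λ_{1,ℓ} (ℓ = 1,…,n) be reals with c·ℓ^{-s/2} ≤ |λ_{i,ℓ}| ≤ C for i = 0,1. Set C_i := Φ · diag(λ_{i,1}², …, λ_{i,n}²) · Φᵀ. Then (1/2)·[tr(C₁⁻¹ C₀ − I_n) + log det C₁ − log det C₀] ≤ (2C/c²) · Σ_{ℓ=1}^n ℓ^s |λ_{0,ℓ} − λ_{1,ℓ}|. -/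
/-!
Conjugation by the orthogonal matrix `Φ` changes neither traces nor determinants, so the
divergence is that of the diagonal covariances: a sum over coordinates of
`½ (a/b − 1 − log (a/b))` with `a = λ₀²`, `b = λ₁²`. By `log u ≤ u − 1` each term is at most
`½ (a − b)² / (ab) ≤ ½ |a − b| / m²`, where `m = c ℓ^{-s/2}` bounds both `|λ|` from below, and
`|a − b| = |λ₀ + λ₁| |λ₀ − λ₁| ≤ 2C |λ₀ − λ₁|`; finally `m⁻² = ℓ^s / c²`.
-/

open Matrix

lemma div_sub_one_add_log_sub_log_le {a b : ℝ} (ha : 0 < a) (hb : 0 < b) :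
    a / b - 1 + (Real.log b - Real.log a) ≤ (a - b) ^ 2 / (a * b) := by
  have hlog : Real.log b - Real.log a ≤ b / a - 1 := by
    rw [← Real.log_div hb.ne' ha.ne']
    exact Real.log_le_sub_one_of_pos (div_pos hb ha)
  have hsum : a / b - 1 + (b / a - 1) = (a - b) ^ 2 / (a * b) := by
    field_simp
    ring
  linarith

lemma sq_sub_div_mul_le_abs_sub_div {a b m : ℝ} (hm : 0 < m) (ha : m ≤ a) (hb : m ≤ b) :
    (a - b) ^ 2 / (a * b) ≤ |a - b| / m := by
  have hab : |a - b| * m ≤ a * b := by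
    rcases le_total a b with hab | hab
    · rw [abs_of_nonpos (sub_nonpos.mpr hab)]
      nlinarith
    · rw [abs_of_nonneg (sub_nonneg.mpr hab)]
      nlinarith
  rw [div_le_div_iff₀ (by nlinarith) hm, ← sq_abs, sq, mul_assoc]
  exact mul_le_mul_of_nonneg_left hab (abs_nonneg _)

lemma abs_sq_sub_sq_le {x y C : ℝ} (hx : |x| ≤ C) (hy : |y| ≤ C) :
    |x ^ 2 - y ^ 2| ≤ 2 * C * |x - y| := by
  calc |x ^ 2 - y ^ 2| = |x + y| * |x - y| := by rw [← abs_mul]; ring_nf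
    _ ≤ 2 * C * |x - y| := by
      gcongr
      linarith [abs_add_le x y]

lemma half_mul_sq_div_sq_sub_one_add_log_sub_log_le {x y m C : ℝ} (hm : 0 < m)
    (hmx : m ≤ |x|) (hxC : |x| ≤ C) (hmy : m ≤ |y|) (hyC : |y| ≤ C) :
    (1 / 2) * (x ^ 2 / y ^ 2 - 1 + (Real.log (y ^ 2) - Real.log (x ^ 2)))
      ≤ 2 * C * |x - y| / m ^ 2 := by
  have hmx2 : m ^ 2 ≤ x ^ 2 := by rw [← sq_abs x]; gcongr
  have hmy2 : m ^ 2 ≤ y ^ 2 := by rw [← sq_abs y]; gcongr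
  have hm2 : 0 < m ^ 2 := by positivity
  have hKL := div_sub_one_add_log_sub_log_le (hm2.trans_le hmx2) (hm2.trans_le hmy2)
  have hratio := sq_sub_div_mul_le_abs_sub_div hm2 hmx2 hmy2
  have hdiff : |x ^ 2 - y ^ 2| / m ^ 2 ≤ 2 * C * |x - y| / m ^ 2 := by
    gcongr
    exact abs_sq_sub_sq_le hxC hyC
  have hnonneg : 0 ≤ 2 * C * |x - y| / m ^ 2 :=
    (div_nonneg (abs_nonneg _) hm2.le).trans hdiff
  linarith

/-- Kullback–Leibler divergence `K(N(0, C₀), N(0, C₁))` between centered Gaussians. -/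
noncomputable def gaussianKL {ι : Type*} [Fintype ι] [DecidableEq ι]
    (C₀ C₁ : Matrix ι ι ℝ) : ℝ :=
  (1 / 2) * (trace (C₁⁻¹ * C₀ - 1) + Real.log C₁.det - Real.log C₀.det)

section Orthogonal

variable {ι : Type*} [Fintype ι] [DecidableEq ι] {Φ : Matrix ι ι ℝ}

lemma inv_mul_mul_transpose_of_transpose_mul_self (hΦ : Φᵀ * Φ = 1) (A : Matrix ι ι ℝ) :
    (Φ * A * Φᵀ)⁻¹ = Φ * A⁻¹ * Φᵀ := by
  rw [Matrix.mul_inv_rev, Matrix.mul_inv_rev, inv_eq_left_inv hΦ, inv_eq_right_inv hΦ,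
    Matrix.mul_assoc]

lemma mul_mul_transpose_mul_of_transpose_mul_self (hΦ : Φᵀ * Φ = 1) (A B : Matrix ι ι ℝ) :
    Φ * A * Φᵀ * (Φ * B * Φᵀ) = Φ * (A * B) * Φᵀ := by
  simp only [Matrix.mul_assoc, ← Matrix.mul_assoc Φᵀ Φ, hΦ, Matrix.one_mul]

lemma trace_mul_mul_transpose_of_transpose_mul_self (hΦ : Φᵀ * Φ = 1) (A : Matrix ι ι ℝ) :
    trace (Φ * A * Φᵀ) = trace A := by
  rw [trace_mul_cycle, hΦ, Matrix.one_mul]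

lemma det_mul_mul_transpose_of_transpose_mul_self (hΦ : Φᵀ * Φ = 1) (A : Matrix ι ι ℝ) :
    (Φ * A * Φᵀ).det = A.det := by
  have hdet : Φ.det * Φ.det = 1 := by
    simpa only [det_mul, det_transpose, det_one] using congrArg det hΦ
  rw [det_mul, det_mul, det_transpose]
  linear_combination A.det * hdet

lemma gaussianKL_mul_mul_transpose (hΦ : Φᵀ * Φ = 1) (A B : Matrix ι ι ℝ) :
    gaussianKL (Φ * A * Φᵀ) (Φ * B * Φᵀ) = gaussianKL A B := by
  rw [gaussianKL, gaussianKL, inv_mul_mul_transpose_of_transpose_mul_self hΦ,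
    mul_mul_transpose_mul_of_transpose_mul_self hΦ, trace_sub, trace_sub,
    trace_mul_mul_transpose_of_transpose_mul_self hΦ,
    det_mul_mul_transpose_of_transpose_mul_self hΦ, det_mul_mul_transpose_of_transpose_mul_self hΦ]

end Orthogonal

lemma gaussianKL_diagonal {ι : Type*} [Fintype ι] [DecidableEq ι] {a b : ι → ℝ}
    (ha : ∀ i, a i ≠ 0) (hb : ∀ i, b i ≠ 0) :
    gaussianKL (diagonal a) (diagonal b)
      = ∑ i, (1 / 2) * (a i / b i - 1 + (Real.log (b i) - Real.log (a i))) := by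
  have hinv : (diagonal b)⁻¹ = diagonal fun i => (b i)⁻¹ := by
    refine inv_eq_left_inv ?_
    rw [diagonal_mul_diagonal, ← diagonal_one]
    exact congrArg diagonal (funext fun i => inv_mul_cancel₀ (hb i))
  rw [gaussianKL, hinv, diagonal_mul_diagonal, trace_sub, trace_one, trace_diagonal, det_diagonal,
    det_diagonal, Real.log_prod (fun i _ => hb i), Real.log_prod (fun i _ => ha i),
    ← Finset.mul_sum]
  simp only [Finset.sum_add_distrib, Finset.sum_sub_distrib, Finset.sum_const, Finset.card_univ,
    nsmul_one, div_eq_inv_mul]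
  ring

lemma Real.rpow_neg_div_two_sq {t : ℝ} (ht : 0 ≤ t) (s : ℝ) :
    (t ^ (-(s / 2))) ^ 2 = (t ^ s)⁻¹ := by
  rw [← Real.rpow_natCast, ← Real.rpow_mul ht, ← Real.rpow_neg ht]
  congr 1
  push_cast
  ring

theorem stmt_9_general (n : ℕ) (s c C : ℝ) (hc : 0 < c)
    (Φ : Matrix (Fin n) (Fin n) ℝ) (hΦ : Φᵀ * Φ = 1)
    (lam0 lam1 : Fin n → ℝ)
    (hlo0 : ∀ ℓ : Fin n, c * (((ℓ : ℕ) : ℝ) + 1) ^ (-(s / 2)) ≤ |lam0 ℓ|)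
    (hhi0 : ∀ ℓ : Fin n, |lam0 ℓ| ≤ C)
    (hlo1 : ∀ ℓ : Fin n, c * (((ℓ : ℕ) : ℝ) + 1) ^ (-(s / 2)) ≤ |lam1 ℓ|)
    (hhi1 : ∀ ℓ : Fin n, |lam1 ℓ| ≤ C) :
    (1 / 2) * (Matrix.trace
        ((Φ * Matrix.diagonal (fun ℓ => lam1 ℓ ^ 2) * Φᵀ)⁻¹
          * (Φ * Matrix.diagonal (fun ℓ => lam0 ℓ ^ 2) * Φᵀ) - 1)
      + Real.log (Φ * Matrix.diagonal (fun ℓ => lam1 ℓ ^ 2) * Φᵀ).det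
      - Real.log (Φ * Matrix.diagonal (fun ℓ => lam0 ℓ ^ 2) * Φᵀ).det)
    ≤ (2 * C / c ^ 2) * ∑ ℓ : Fin n, (((ℓ : ℕ) : ℝ) + 1) ^ s * |lam0 ℓ - lam1 ℓ| := by
  have hm : ∀ ℓ : Fin n, 0 < c * (((ℓ : ℕ) : ℝ) + 1) ^ (-(s / 2)) :=
    fun ℓ => mul_pos hc (Real.rpow_pos_of_pos (by positivity) _)
  change gaussianKL (Φ * diagonal _ * Φᵀ) (Φ * diagonal _ * Φᵀ) ≤ _
  rw [gaussianKL_mul_mul_transpose hΦ,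
    gaussianKL_diagonal (fun ℓ => pow_ne_zero 2 (abs_pos.mp ((hm ℓ).trans_le (hlo0 ℓ))))
      (fun ℓ => pow_ne_zero 2 (abs_pos.mp ((hm ℓ).trans_le (hlo1 ℓ)))), Finset.mul_sum]
  refine Finset.sum_le_sum fun ℓ _ => ?_
  calc _ ≤ 2 * C * |lam0 ℓ - lam1 ℓ| / (c * (((ℓ : ℕ) : ℝ) + 1) ^ (-(s / 2))) ^ 2 :=
        half_mul_sq_div_sq_sub_one_add_log_sub_log_le (hm ℓ) (hlo0 ℓ) (hhi0 ℓ) (hlo1 ℓ) (hhi1 ℓ)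
    _ = 2 * C / c ^ 2 * ((((ℓ : ℕ) : ℝ) + 1) ^ s * |lam0 ℓ - lam1 ℓ|) := by
        rw [mul_pow, Real.rpow_neg_div_two_sq (by positivity)]
        field_simp

/-- KL bound of Lemma A.1: for centered Gaussians with covariances
`C_i = Φ diag(λ_i²) Φᵀ` sharing an orthogonal eigenbasis `Φ` and eigenvalues
satisfying `c ℓ^{-s/2} ≤ |λ_{i,ℓ}| ≤ C`,
`(1/2)[tr(C₁⁻¹C₀ − I) + log det C₁ − log det C₀] ≤ (2C/c²) Σ_ℓ ℓ^s |λ_{0,ℓ} − λ_{1,ℓ}|`. -/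
theorem stmt_9 (n : ℕ) (s c C : ℝ) (hs : 0 ≤ s) (hc : 0 < c) (hC : 0 < C)
    (Φ : Matrix (Fin n) (Fin n) ℝ) (hΦ : Φᵀ * Φ = 1)
    (lam0 lam1 : Fin n → ℝ)
    (hlo0 : ∀ ℓ : Fin n, c * (((ℓ : ℕ) : ℝ) + 1) ^ (-(s / 2)) ≤ |lam0 ℓ|)
    (hhi0 : ∀ ℓ : Fin n, |lam0 ℓ| ≤ C)
    (hlo1 : ∀ ℓ : Fin n, c * (((ℓ : ℕ) : ℝ) + 1) ^ (-(s / 2)) ≤ |lam1 ℓ|)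
    (hhi1 : ∀ ℓ : Fin n, |lam1 ℓ| ≤ C) :
    (1 / 2) * (Matrix.trace
        ((Φ * Matrix.diagonal (fun ℓ => lam1 ℓ ^ 2) * Φᵀ)⁻¹
          * (Φ * Matrix.diagonal (fun ℓ => lam0 ℓ ^ 2) * Φᵀ) - 1)
      + Real.log (Φ * Matrix.diagonal (fun ℓ => lam1 ℓ ^ 2) * Φᵀ).det
      - Real.log (Φ * Matrix.diagonal (fun ℓ => lam0 ℓ ^ 2) * Φᵀ).det)
    ≤ (2 * C / c ^ 2) * ∑ ℓ : Fin n, (((ℓ : ℕ) : ℝ) + 1) ^ s * |lam0 ℓ - lam1 ℓ| :=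
  stmt_9_general n s c C hc Φ hΦ lam0 lam1 hlo0 hhi0 hlo1 hhi1
end

section
/- Let n ∈ ℕ, let Φ be an n × n real orthogonal matrix, and let d_{0,ℓ}, d_{1,ℓ} > 0 (ℓ = 1,…,n). Set C_i := Φ · diag(d_{i,1}, …, d_{i,n}) · Φᵀ. Then 1 − (det C₀ · det C₁)^{1/4} / det((C₀ + C₁)/2)^{1/2} ≤ (1/4) · Σ_{ℓ=1}^n ( √(d_{0,ℓ}/d_{1,ℓ}) + √(d_{1,ℓ}/d_{0,ℓ}) − 2 ). -/
/-!
Conjugation by the orthogonal `Φ` preserves determinants, so the Hellinger affinity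
`|C₀ C₁|^{1/4} / |(C₀ + C₁)/2|^{1/2}` factorises into the one-dimensional affinities
`ρ_ℓ = (d₀ℓ d₁ℓ)^{1/4} / ((d₀ℓ + d₁ℓ)/2)^{1/2} ∈ (0, 1]`. For numbers in `[0, 1]`,
`1 - ∏ ρ_ℓ ≤ ∑ (1 - ρ_ℓ)`, and each term is bounded using `ρ⁻² = (√(a/b) + √(b/a))/2` and
`1 - ρ ≤ (ρ⁻² - 1)/2`.
-/

open Matrix

theorem Matrix.det_mul_mul_transpose_of_transpose_mul_self_eq_one {m α : Type*} [Fintype m]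
    [DecidableEq m] [CommRing α] {Φ : Matrix m m α} (hΦ : Φᵀ * Φ = 1) (N : Matrix m m α) :
    (Φ * N * Φᵀ).det = N.det := by
  rw [← inv_eq_left_inv hΦ]
  exact det_conj ((isUnit_iff_isUnit_det Φ).mpr (isUnit_det_of_left_inverse hΦ)) N

theorem Finset.one_sub_prod_le_sum_one_sub {ι R : Type*} [CommRing R] [LinearOrder R]
    [IsStrictOrderedRing R] (s : Finset ι) {r : ι → R}
    (h0 : ∀ i ∈ s, 0 ≤ r i) (h1 : ∀ i ∈ s, r i ≤ 1) :
    1 - ∏ i ∈ s, r i ≤ ∑ i ∈ s, (1 - r i) := by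
  induction s using Finset.cons_induction with
  | empty => simp
  | cons a t ha ih =>
    simp only [Finset.forall_mem_cons] at h0 h1
    rw [Finset.prod_cons, Finset.sum_cons]
    have hprod : ∏ i ∈ t, r i ≤ 1 := Finset.prod_le_one h0.2 h1.2
    -- `1 - r a P = (1 - r a) + r a (1 - P)` with `0 ≤ r a ≤ 1`
    nlinarith [ih h0.2 h1.2, mul_le_mul_of_nonneg_left (sub_nonneg.2 hprod) h0.1]

theorem one_sub_le_two_div_sq_sub_two_div_four {u : ℝ} (hu : 0 < u) :
    1 - u ≤ (2 / u ^ 2 - 2) / 4 := by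
  rw [div_sub' (by positivity), div_div, le_div_iff₀ (by positivity)]
  -- the difference is `2 (1 - u)² (1 + 2u)`
  nlinarith [mul_nonneg (sq_nonneg (1 - u)) (by positivity : (0:ℝ) ≤ 1 + 2 * u)]

-- The Bhattacharyya coefficient of `N(0, a)` and `N(0, b)`.
noncomputable def hellingerAffinity (a b : ℝ) : ℝ :=
  (a * b) ^ (1 / 4 : ℝ) / ((a + b) / 2) ^ (1 / 2 : ℝ)

theorem hellingerAffinity_pos {a b : ℝ} (ha : 0 < a) (hb : 0 < b) :
    0 < hellingerAffinity a b := by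
  unfold hellingerAffinity; positivity

theorem hellingerAffinity_sq {a b : ℝ} (ha : 0 < a) (hb : 0 < b) :
    hellingerAffinity a b ^ 2 = 2 * √a * √b / (a + b) := by
  have hquarter : ((a * b) ^ (1 / 4 : ℝ)) ^ 2 = √a * √b := by
    rw [← Real.rpow_natCast, ← Real.rpow_mul (by positivity), ← Real.sqrt_mul ha.le,
      Real.sqrt_eq_rpow]
    norm_num
  have hhalf : (((a + b) / 2) ^ (1 / 2 : ℝ)) ^ 2 = (a + b) / 2 := by
    rw [← Real.sqrt_eq_rpow, Real.sq_sqrt (by positivity)]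
  rw [hellingerAffinity, div_pow, hquarter, hhalf]
  field_simp

theorem hellingerAffinity_le_one {a b : ℝ} (ha : 0 < a) (hb : 0 < b) :
    hellingerAffinity a b ≤ 1 := by
  refine (pow_le_one_iff_of_nonneg (hellingerAffinity_pos ha hb).le two_ne_zero).1 ?_
  rw [hellingerAffinity_sq ha hb, div_le_one (by positivity)]
  nlinarith [sq_nonneg (√a - √b), Real.sq_sqrt ha.le, Real.sq_sqrt hb.le]

theorem one_sub_hellingerAffinity_le {a b : ℝ} (ha : 0 < a) (hb : 0 < b) :
    1 - hellingerAffinity a b ≤ 1 / 4 * (√(a / b) + √(b / a) - 2) := by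
  have hsum : √(a / b) + √(b / a) = 2 / hellingerAffinity a b ^ 2 := by
    have hx := Real.sqrt_pos.2 ha
    have hy := Real.sqrt_pos.2 hb
    rw [hellingerAffinity_sq ha hb, Real.sqrt_div ha.le, Real.sqrt_div hb.le,
      ← Real.sq_sqrt ha.le, ← Real.sq_sqrt hb.le, Real.sqrt_sq hx.le, Real.sqrt_sq hy.le]
    field_simp
  rw [hsum]
  linarith [one_sub_le_two_div_sq_sub_two_div_four (hellingerAffinity_pos ha hb)]

/-- Hellinger bound from the proof of Lemma A.1: for simultaneously diagonalizable
positive covariances `C_i = Φ diag(d_i) Φᵀ` (orthogonal `Φ`),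
`1 − (det C₀ det C₁)^{1/4} / det((C₀+C₁)/2)^{1/2}
  ≤ (1/4) Σ_ℓ (√(d₀ℓ/d₁ℓ) + √(d₁ℓ/d₀ℓ) − 2)`. -/
theorem stmt_10 (n : ℕ) (Φ : Matrix (Fin n) (Fin n) ℝ) (hΦ : Φᵀ * Φ = 1)
    (d0 d1 : Fin n → ℝ) (h0 : ∀ ℓ, 0 < d0 ℓ) (h1 : ∀ ℓ, 0 < d1 ℓ) :
    1 - ((Φ * Matrix.diagonal d0 * Φᵀ).det * (Φ * Matrix.diagonal d1 * Φᵀ).det)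
          ^ ((1 : ℝ) / 4)
        / (((1 / 2 : ℝ) • (Φ * Matrix.diagonal d0 * Φᵀ + Φ * Matrix.diagonal d1 * Φᵀ)).det)
          ^ ((1 : ℝ) / 2)
      ≤ (1 / 4) * ∑ ℓ : Fin n,
          (Real.sqrt (d0 ℓ / d1 ℓ) + Real.sqrt (d1 ℓ / d0 ℓ) - 2) := by
  have hmean : (1 / 2 : ℝ) • (Φ * diagonal d0 * Φᵀ + Φ * diagonal d1 * Φᵀ)
      = Φ * diagonal (fun ℓ => (d0 ℓ + d1 ℓ) / 2) * Φᵀ := by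
    rw [← add_mul, ← mul_add, diagonal_add, ← Matrix.smul_mul, ← Matrix.mul_smul,
      ← diagonal_smul]
    congr 3 with ℓ
    simp only [Pi.smul_apply, smul_eq_mul]
    ring
  have haffinity : ((Φ * diagonal d0 * Φᵀ).det * (Φ * diagonal d1 * Φᵀ).det) ^ (1 / 4 : ℝ)
        / ((1 / 2 : ℝ) • (Φ * diagonal d0 * Φᵀ + Φ * diagonal d1 * Φᵀ)).det ^ (1 / 2 : ℝ)
      = ∏ ℓ, hellingerAffinity (d0 ℓ) (d1 ℓ) := by
    simp only [hmean, det_mul_mul_transpose_of_transpose_mul_self_eq_one hΦ, det_diagonal,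
      hellingerAffinity]
    rw [← Finset.prod_mul_distrib,
      ← Real.finsetProd_rpow _ _ fun ℓ _ => (mul_pos (h0 ℓ) (h1 ℓ)).le,
      ← Real.finsetProd_rpow _ _ fun ℓ _ => by linarith [h0 ℓ, h1 ℓ], Finset.prod_div_distrib]
  rw [haffinity, Finset.mul_sum]
  calc 1 - ∏ ℓ, hellingerAffinity (d0 ℓ) (d1 ℓ)
      ≤ ∑ ℓ, (1 - hellingerAffinity (d0 ℓ) (d1 ℓ)) :=
        Finset.one_sub_prod_le_sum_one_sub _
          (fun ℓ _ => (hellingerAffinity_pos (h0 ℓ) (h1 ℓ)).le)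
          fun ℓ _ => hellingerAffinity_le_one (h0 ℓ) (h1 ℓ)
    _ ≤ _ := Finset.sum_le_sum fun ℓ _ => one_sub_hellingerAffinity_le (h0 ℓ) (h1 ℓ)
end

section
/- Let n ∈ ℕ, s ≥ 0, and c, C > 0. Let Φ be an n × n real orthogonal matrix and let λ_{0,ℓ}, λ_{1,ℓ} (ℓ = 1,…,n) be reals with c·ℓ^{-s/2} ≤ |λ_{i,ℓ}| ≤ C for i = 0,1. Set C_i := Φ · diag(λ_{i,1}², …, λ_{i,n}²) · Φᵀ. Then (1/2)·tr((C₁⁻¹ C₀ − I_n)²) ≤ (2C²/c⁴) · Σ_{ℓ=1}^n ℓ^{2s} (λ_{0,ℓ} − λ_{1,ℓ})² ≤ (2C²/c⁴) · (Σ_{ℓ=1}^n ℓ^s |λ_{0,ℓ} − λ_{1,ℓ}|)². -/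
open Matrix

/-!
Conjugation by the orthogonal matrix `Φ` is a ring automorphism that preserves traces and commutes
with matrix inversion, so `C₁⁻¹ C₀ - 1` is conjugate to the diagonal matrix with entries
`λ₀ℓ² / λ₁ℓ² - 1 = (λ₀ℓ - λ₁ℓ)(λ₀ℓ + λ₁ℓ) / λ₁ℓ²`, and the trace of its square is the sum of their
squares. Each of these is at most `(2C)² (λ₀ℓ - λ₁ℓ)² / (c ℓ^{-s/2})⁴`. The second inequality is
`∑ aℓ² ≤ (∑ aℓ)²` for nonnegative `aℓ`.
-/

section OrthogonalConj

variable {m : Type*} [Fintype m] [DecidableEq m]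

section CommRing

variable {R : Type*} [CommRing R] {Φ : Matrix m m R}

theorem Matrix.conj_mul_conj (hΦ : Φᵀ * Φ = 1) (A B : Matrix m m R) :
    Φ * A * Φᵀ * (Φ * B * Φᵀ) = Φ * (A * B) * Φᵀ := by
  simp only [Matrix.mul_assoc, ← Matrix.mul_assoc Φᵀ Φ, hΦ, Matrix.one_mul]

theorem Matrix.inv_conj (hΦ : Φᵀ * Φ = 1) (A : Matrix m m R) :
    (Φ * A * Φᵀ)⁻¹ = Φ * A⁻¹ * Φᵀ := by
  rw [Matrix.mul_inv_rev, Matrix.mul_inv_rev, Matrix.inv_eq_right_inv hΦ,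
    Matrix.inv_eq_left_inv hΦ, Matrix.mul_assoc]

theorem Matrix.trace_conj_of_transpose_mul_self (hΦ : Φᵀ * Φ = 1) (A : Matrix m m R) :
    trace (Φ * A * Φᵀ) = trace A := by
  rw [Matrix.trace_mul_cycle, hΦ, Matrix.one_mul]

end CommRing

theorem Matrix.trace_sq_inv_conj_diagonal_mul_sub_one {K : Type*} [Field K] {Φ : Matrix m m K}
    (hΦ : Φᵀ * Φ = 1) (d₀ : m → K) {d₁ : m → K} (hd₁ : ∀ i, d₁ i ≠ 0) :
    trace (((Φ * diagonal d₁ * Φᵀ)⁻¹ * (Φ * diagonal d₀ * Φᵀ) - 1) ^ 2)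
      = ∑ i, (d₀ i / d₁ i - 1) ^ 2 := by
  have hΦΦ : Φ * Φᵀ = 1 := mul_eq_one_comm.mp hΦ
  have hinv : (diagonal d₁)⁻¹ = diagonal fun i => (d₁ i)⁻¹ := by
    refine Matrix.inv_eq_left_inv ?_
    rw [diagonal_mul_diagonal, ← diagonal_one]
    exact congrArg diagonal (funext fun i => inv_mul_cancel₀ (hd₁ i))
  have hdiag : (diagonal d₁)⁻¹ * diagonal d₀ - 1 = diagonal fun i => d₀ i / d₁ i - 1 := by
    rw [hinv, diagonal_mul_diagonal, ← diagonal_one, diagonal_sub]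
    simp only [div_eq_inv_mul]
  have hone : (1 : Matrix m m K) = Φ * 1 * Φᵀ := by rw [Matrix.mul_one, hΦΦ]
  rw [Matrix.inv_conj hΦ, Matrix.conj_mul_conj hΦ, hone, ← Matrix.sub_mul, ← Matrix.mul_sub,
    sq, Matrix.conj_mul_conj hΦ, Matrix.trace_conj_of_transpose_mul_self hΦ, hdiag,
    diagonal_mul_diagonal, trace_diagonal]
  simp only [sq]

end OrthogonalConj

theorem sq_div_sq_sub_one_sq_le {a b B C : ℝ} (hB : 0 < B) (hBb : B ≤ |b|) (ha : |a| ≤ C)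
    (hb : |b| ≤ C) :
    (a ^ 2 / b ^ 2 - 1) ^ 2 ≤ 4 * C ^ 2 / B ^ 4 * (a - b) ^ 2 := by
  have hb0 : b ^ 2 ≠ 0 := pow_ne_zero 2 (abs_pos.mp (hB.trans_le hBb))
  have hfactor : a ^ 2 / b ^ 2 - 1 = (a - b) * (a + b) / b ^ 2 := by
    rw [div_sub_one hb0]
    ring
  have hsum : (a + b) ^ 2 ≤ (2 * C) ^ 2 := by
    rw [← sq_abs (a + b)]
    gcongr
    linarith [abs_add_le a b]
  have hden : B ^ 4 ≤ (b ^ 2) ^ 2 :=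
    calc B ^ 4 ≤ |b| ^ 4 := by gcongr
      _ = (b ^ 2) ^ 2 := by rw [← sq_abs b]; ring
  calc (a ^ 2 / b ^ 2 - 1) ^ 2 = (a - b) ^ 2 * (a + b) ^ 2 / (b ^ 2) ^ 2 := by
        rw [hfactor, div_pow, mul_pow]
    _ ≤ (a - b) ^ 2 * (2 * C) ^ 2 / B ^ 4 := by gcongr
    _ = 4 * C ^ 2 / B ^ 4 * (a - b) ^ 2 := by ring

theorem Real.mul_rpow_neg_half_pow_four {x : ℝ} (hx : 0 < x) (c s : ℝ) :
    (c * x ^ (-(s / 2))) ^ 4 = c ^ 4 / x ^ (2 * s) := by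
  rw [mul_pow, ← Real.rpow_mul_natCast hx.le, div_eq_mul_inv (c ^ 4), ← Real.rpow_neg hx.le]
  congr 2
  push_cast
  ring

theorem Real.rpow_two_mul_mul_sq {x : ℝ} (hx : 0 ≤ x) (s a : ℝ) :
    x ^ (2 * s) * a ^ 2 = (x ^ s * |a|) ^ 2 := by
  rw [mul_pow, sq_abs, ← Real.rpow_mul_natCast hx, mul_comm s]
  norm_num

theorem stmt_12_general (n : ℕ) (s c C : ℝ) (hc : 0 < c)
    (Φ : Matrix (Fin n) (Fin n) ℝ) (hΦ : Φᵀ * Φ = 1)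
    (lam0 lam1 : Fin n → ℝ)
    (hhi0 : ∀ ℓ : Fin n, |lam0 ℓ| ≤ C)
    (hlo1 : ∀ ℓ : Fin n, c * (((ℓ : ℕ) : ℝ) + 1) ^ (-(s / 2)) ≤ |lam1 ℓ|)
    (hhi1 : ∀ ℓ : Fin n, |lam1 ℓ| ≤ C) :
    ((1 / 2) * Matrix.trace
        (((Φ * Matrix.diagonal (fun ℓ => lam1 ℓ ^ 2) * Φᵀ)⁻¹
          * (Φ * Matrix.diagonal (fun ℓ => lam0 ℓ ^ 2) * Φᵀ) - 1) ^ 2)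
      ≤ (2 * C ^ 2 / c ^ 4)
          * ∑ ℓ : Fin n, (((ℓ : ℕ) : ℝ) + 1) ^ (2 * s) * (lam0 ℓ - lam1 ℓ) ^ 2) ∧
    ((2 * C ^ 2 / c ^ 4)
          * ∑ ℓ : Fin n, (((ℓ : ℕ) : ℝ) + 1) ^ (2 * s) * (lam0 ℓ - lam1 ℓ) ^ 2
      ≤ (2 * C ^ 2 / c ^ 4)
          * (∑ ℓ : Fin n, (((ℓ : ℕ) : ℝ) + 1) ^ s * |lam0 ℓ - lam1 ℓ|) ^ 2) := by
  have hlam1 (ℓ : Fin n) : lam1 ℓ ^ 2 ≠ 0 :=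
    pow_ne_zero 2 (abs_pos.mp (lt_of_lt_of_le (by positivity) (hlo1 ℓ)))
  refine ⟨?_, ?_⟩
  · have hterm (ℓ : Fin n) : (lam0 ℓ ^ 2 / lam1 ℓ ^ 2 - 1) ^ 2
        ≤ 4 * C ^ 2 / c ^ 4 * ((((ℓ : ℕ) : ℝ) + 1) ^ (2 * s) * (lam0 ℓ - lam1 ℓ) ^ 2) := by
      have hx : (0 : ℝ) < ((ℓ : ℕ) : ℝ) + 1 := by positivity
      have h := sq_div_sq_sub_one_sq_le (by positivity) (hlo1 ℓ) (hhi0 ℓ) (hhi1 ℓ)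
      rwa [Real.mul_rpow_neg_half_pow_four hx, div_div_eq_mul_div, mul_div_right_comm,
        mul_assoc] at h
    rw [Matrix.trace_sq_inv_conj_diagonal_mul_sub_one hΦ _ hlam1]
    calc 1 / 2 * ∑ ℓ, (lam0 ℓ ^ 2 / lam1 ℓ ^ 2 - 1) ^ 2
        ≤ 1 / 2 * ∑ ℓ : Fin n,
            4 * C ^ 2 / c ^ 4 * ((((ℓ : ℕ) : ℝ) + 1) ^ (2 * s) * (lam0 ℓ - lam1 ℓ) ^ 2) := by
          gcongr with ℓ
          exact hterm ℓ
      _ = _ := by rw [← Finset.mul_sum, ← mul_assoc]; ring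
  · gcongr
    rw [Finset.sum_congr rfl fun (ℓ : Fin n) _ =>
      Real.rpow_two_mul_mul_sq (x := ((ℓ : ℕ) : ℝ) + 1) (by positivity) s (lam0 ℓ - lam1 ℓ)]
    exact Finset.sum_sq_le_sq_sum_of_nonneg fun ℓ _ => by positivity

/-- KL-variation bound of Lemma A.1: with `C_i = Φ diag(λ_i²) Φᵀ`, orthogonal `Φ`,
and `c ℓ^{-s/2} ≤ |λ_{i,ℓ}| ≤ C`,
`(1/2) tr((C₁⁻¹C₀ − I)²) ≤ (2C²/c⁴) Σ ℓ^{2s}(λ₀−λ₁)² ≤ (2C²/c⁴)(Σ ℓ^s|λ₀−λ₁|)²`. -/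
theorem stmt_12 (n : ℕ) (s c C : ℝ) (hs : 0 ≤ s) (hc : 0 < c) (hC : 0 < C)
    (Φ : Matrix (Fin n) (Fin n) ℝ) (hΦ : Φᵀ * Φ = 1)
    (lam0 lam1 : Fin n → ℝ)
    (hlo0 : ∀ ℓ : Fin n, c * (((ℓ : ℕ) : ℝ) + 1) ^ (-(s / 2)) ≤ |lam0 ℓ|)
    (hhi0 : ∀ ℓ : Fin n, |lam0 ℓ| ≤ C)
    (hlo1 : ∀ ℓ : Fin n, c * (((ℓ : ℕ) : ℝ) + 1) ^ (-(s / 2)) ≤ |lam1 ℓ|)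
    (hhi1 : ∀ ℓ : Fin n, |lam1 ℓ| ≤ C) :
    ((1 / 2) * Matrix.trace
        (((Φ * Matrix.diagonal (fun ℓ => lam1 ℓ ^ 2) * Φᵀ)⁻¹
          * (Φ * Matrix.diagonal (fun ℓ => lam0 ℓ ^ 2) * Φᵀ) - 1) ^ 2)
      ≤ (2 * C ^ 2 / c ^ 4)
          * ∑ ℓ : Fin n, (((ℓ : ℕ) : ℝ) + 1) ^ (2 * s) * (lam0 ℓ - lam1 ℓ) ^ 2) ∧
    ((2 * C ^ 2 / c ^ 4)
          * ∑ ℓ : Fin n, (((ℓ : ℕ) : ℝ) + 1) ^ (2 * s) * (lam0 ℓ - lam1 ℓ) ^ 2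
      ≤ (2 * C ^ 2 / c ^ 4)
          * (∑ ℓ : Fin n, (((ℓ : ℕ) : ℝ) + 1) ^ s * |lam0 ℓ - lam1 ℓ|) ^ 2) :=
  stmt_12_general n s c C hc Φ hΦ lam0 lam1 hhi0 hlo1 hhi1
end

section
/- Let I, J, L ∈ ℕ with L ≤ I. Let C be an invertible J × J real matrix, let Φ be an I × L real matrix with Φᵀ Φ = I_L, and let D be an arbitrary (J·L) × (J·L) real matrix. Then det( C ⊗ I_I + (I_J ⊗ Φ) · D · (I_J ⊗ Φᵀ) ) = det(C)^{I − L} · det( C ⊗ I_L + D ), where ⊗ denotes the Kronecker product of matrices and I_m the m × m identity matrix. -/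
open Matrix
open scoped Kronecker

/-- Determinant identity from Appendix C: for invertible `C : J × J`, `Φ : I × L` with
`Φᵀ Φ = I_L` (`L ≤ I`), and arbitrary `D : (J·L) × (J·L)`,
`det(C ⊗ I_I + (I_J ⊗ Φ) D (I_J ⊗ Φᵀ)) = det(C)^{I−L} · det(C ⊗ I_L + D)`. -/
theorem stmt_16 (I J L : ℕ) (hLI : L ≤ I)
    (C : Matrix (Fin J) (Fin J) ℝ) (hC : IsUnit C.det)
    (Φ : Matrix (Fin I) (Fin L) ℝ) (hΦ : Φᵀ * Φ = 1)
    (D : Matrix (Fin J × Fin L) (Fin J × Fin L) ℝ) :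
    (C ⊗ₖ (1 : Matrix (Fin I) (Fin I) ℝ)
        + ((1 : Matrix (Fin J) (Fin J) ℝ) ⊗ₖ Φ) * D
            * ((1 : Matrix (Fin J) (Fin J) ℝ) ⊗ₖ Φᵀ)).det
      = C.det ^ (I - L) * (C ⊗ₖ (1 : Matrix (Fin L) (Fin L) ℝ) + D).det := by
  have hCinv : C * C⁻¹ = 1 := mul_nonsing_inv C hC
  have h1I : (C ⊗ₖ (1 : Matrix (Fin I) (Fin I) ℝ)) * (C⁻¹ ⊗ₖ (1 : Matrix (Fin I) (Fin I) ℝ))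
      = 1 := by
    rw [← mul_kronecker_mul, hCinv, Matrix.one_mul, one_kronecker_one]
  have h1L : (C ⊗ₖ (1 : Matrix (Fin L) (Fin L) ℝ)) * (C⁻¹ ⊗ₖ (1 : Matrix (Fin L) (Fin L) ℝ))
      = 1 := by
    rw [← mul_kronecker_mul, hCinv, Matrix.one_mul, one_kronecker_one]
  have hbig : C ⊗ₖ (1 : Matrix (Fin I) (Fin I) ℝ)
        + ((1 : Matrix (Fin J) (Fin J) ℝ) ⊗ₖ Φ) * D
            * ((1 : Matrix (Fin J) (Fin J) ℝ) ⊗ₖ Φᵀ)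
      = (C ⊗ₖ (1 : Matrix (Fin I) (Fin I) ℝ)) *
        (1 + ((C⁻¹ ⊗ₖ (1 : Matrix (Fin I) (Fin I) ℝ)) * ((1 : Matrix (Fin J) (Fin J) ℝ) ⊗ₖ Φ) * D)
            * ((1 : Matrix (Fin J) (Fin J) ℝ) ⊗ₖ Φᵀ)) := by
    rw [mul_add, mul_one]
    congr 1
    rw [← Matrix.mul_assoc, ← Matrix.mul_assoc, ← Matrix.mul_assoc, h1I, Matrix.one_mul]
  have hsmall : C ⊗ₖ (1 : Matrix (Fin L) (Fin L) ℝ) + D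
      = (C ⊗ₖ (1 : Matrix (Fin L) (Fin L) ℝ)) *
        (1 + (C⁻¹ ⊗ₖ (1 : Matrix (Fin L) (Fin L) ℝ)) * D) := by
    rw [mul_add, mul_one, ← Matrix.mul_assoc, h1L, Matrix.one_mul]
  have hcomm := Matrix.det_one_add_mul_comm
    ((C⁻¹ ⊗ₖ (1 : Matrix (Fin I) (Fin I) ℝ)) * ((1 : Matrix (Fin J) (Fin J) ℝ) ⊗ₖ Φ) * D)
    ((1 : Matrix (Fin J) (Fin J) ℝ) ⊗ₖ Φᵀ)
  have hmid : ((1 : Matrix (Fin J) (Fin J) ℝ) ⊗ₖ Φᵀ) *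
      ((C⁻¹ ⊗ₖ (1 : Matrix (Fin I) (Fin I) ℝ)) * ((1 : Matrix (Fin J) (Fin J) ℝ) ⊗ₖ Φ) * D)
      = (C⁻¹ ⊗ₖ (1 : Matrix (Fin L) (Fin L) ℝ)) * D := by
    rw [← Matrix.mul_assoc, ← Matrix.mul_assoc, ← mul_kronecker_mul, ← mul_kronecker_mul,
      Matrix.mul_one, Matrix.one_mul, Matrix.mul_one, hΦ]
  rw [hbig, hsmall, Matrix.det_mul, Matrix.det_mul, hcomm, hmid, det_kronecker, det_kronecker]
  simp only [Matrix.det_one, one_pow, mul_one, Fintype.card_fin]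
  rw [show C.det ^ I = C.det ^ (I - L) * C.det ^ L by rw [← pow_add, Nat.sub_add_cancel hLI]]
  ring
end
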